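/- Let α ∈ ℝ, τ > 0, h⁺, h⁻ > 0, t, x, x̂ ∈ ℝ, Δx = x̂ − x, and let u, u₊, u₋, û > 0 satisfy both equations of the invariant difference model for the heat equation. Define the Galilean-transformed data: x* = x + 2αt, x̂* = x̂ + 2α(t+τ) (so Δx* = Δx + 2ατ), steps h⁺, h⁻ and τ unchanged, and u* = u·e^{−αx − α²t}, u₊* = u₊·e^{−α(x+h⁺) − α²t}, u₋* = u₋·e^{−α(x−h⁻) − α²t}, û* = û·e^{−αx̂ − α²(t+τ)}. Then the transformed data again satisfy both equations of the model. That is, the invariant scheme on the moving mesh admits the Galilean symmetry X₃ = 2t∂/∂x − xu∂/∂u of the heat equation, in contrast to the standard explicit scheme on an orthogonal mesh. -/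
import Mathlib


open Real

/-- The invariant difference model for the linear heat equation `u_t = u_xx` on
a moving mesh with flat time layers:
(i) `Δx = (2τ/(h⁺+h⁻))·(−(h⁻/h⁺)ln(u₊/u) + (h⁺/h⁻)ln(u₋/u))`;
(ii) `(u/û)²·exp(−Δx²/(2τ)) = 1 − (4τ/(h⁺+h⁻))·((1/h⁺)ln(u₊/u) + (1/h⁻)ln(u₋/u))`. -/
def HeatModel (τ hp hm Δx u up um uh : ℝ) : Prop :=
  (Δx = (2 * τ / (hp + hm))
      * (-(hm / hp) * Real.log (up / u) + (hp / hm) * Real.log (um / u))) ∧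
  ((u / uh) ^ 2 * Real.exp (-(Δx ^ 2) / (2 * τ))
    = 1 - (4 * τ / (hp + hm))
        * ((1 / hp) * Real.log (up / u) + (1 / hm) * Real.log (um / u)))

lemma log_mul_exp_div (a b p q : ℝ) (ha : 0 < a) (hb : 0 < b) :
    Real.log (a * Real.exp p / (b * Real.exp q)) = Real.log (a / b) + (p - q) := by
  rw [Real.log_div (by positivity) (by positivity),
    Real.log_mul ha.ne' (Real.exp_pos p).ne',
    Real.log_mul hb.ne' (Real.exp_pos q).ne',
    Real.log_exp, Real.log_exp, Real.log_div ha.ne' hb.ne']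
  ring

/-- The invariant difference scheme for the heat equation on a moving mesh
admits the Galilean symmetry `X₃ = 2t∂/∂x − xu∂/∂u`: shifting `x` by `2αt`
and `x̂` by `2α(t+τ)` (so `Δx` by `2ατ`), keeping the steps fixed, and
multiplying the values by the Galilean exponential factors maps solutions of
the model to solutions. -/
theorem invariant_heat_scheme_galilean_invariant
    (α τ hp hm t x xh Δx : ℝ) (hτ : 0 < τ) (hhp : 0 < hp) (hhm : 0 < hm)
    (hΔx : Δx = xh - x)
    (u up um uh : ℝ) (hu : 0 < u) (hup : 0 < up) (hum : 0 < um) (huh : 0 < uh)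
    (hmodel : HeatModel τ hp hm Δx u up um uh) :
    HeatModel τ hp hm (Δx + 2 * α * τ)
      (u * Real.exp (-(α * x) - α ^ 2 * t))
      (up * Real.exp (-(α * (x + hp)) - α ^ 2 * t))
      (um * Real.exp (-(α * (x - hm)) - α ^ 2 * t))
      (uh * Real.exp (-(α * xh) - α ^ 2 * (t + τ))) := by
  obtain ⟨h1, h2⟩ := hmodel
  have hpm : hp + hm ≠ 0 := by positivity
  constructor
  · rw [log_mul_exp_div up u _ _ hup hu, log_mul_exp_div um u _ _ hum hu]
    rw [h1]
    field_simp
    ring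
  · rw [log_mul_exp_div up u _ _ hup hu, log_mul_exp_div um u _ _ hum hu]
    have hratio : u * Real.exp (-(α * x) - α ^ 2 * t)
        / (uh * Real.exp (-(α * xh) - α ^ 2 * (t + τ)))
        = u / uh * Real.exp (α * Δx + α ^ 2 * τ) := by
      rw [hΔx, mul_div_mul_comm, ← Real.exp_sub]
      congr 1
      ring
    have hexp : Real.exp (α * Δx + α ^ 2 * τ) ^ 2
        * Real.exp (-((Δx + 2 * α * τ) ^ 2) / (2 * τ))
        = Real.exp (-(Δx ^ 2) / (2 * τ)) := by
      rw [← Real.exp_nat_mul, ← Real.exp_add]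
      congr 1
      field_simp
      ring
    rw [hratio, mul_pow, mul_assoc, hexp, h2]
    field_simp
    ring
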